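/- Let V = ℝ^{2n} with the standard symplectic form ω. For any two subspaces W₁, W₂ ≤ V there exists h ∈ Sp(V,ω) such that h(W₁) and W₂ are in general position; explicitly, h(W₁) ∩ W₂ = {0} if dim W₁ + dim W₂ ≤ 2n, and h(W₁) + W₂ = V if dim W₁ + dim W₂ ≥ 2n. -/

import Mathlib

/-- The standard symplectic form `ω` on `V = ℝ^{2n}`. -/
noncomputable def stdSymplectic (n : ℕ) :
    LinearMap.BilinForm ℝ ((Fin n ⊕ Fin n) → ℝ) :=
  Matrix.toBilin' (Matrix.fromBlocks 0 1 (-1) 0)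

/-!
Let `B` be a nondegenerate alternating form on a finite-dimensional space `V`, and
`dim U + dim W ≤ dim V` with `U ⊓ W ≠ 0`. Then `U ⊔ W ≠ V`, so some `u` lies outside both `U ⊔ W`
and `(U ⊓ W)ᗮ`, since a vector space is never the union of two proper subspaces. For the
transvection `T x = x + B x u • u`, which preserves `B`: if `y ∈ U` and `T y ∈ W` then `B y u = 0`
(otherwise `u ∈ U ⊔ W`), so `T y = y`. Hence `T(U) ⊓ W ≤ (U ⊓ W) ⊓ uᗮ`, which is strictly smaller
than `U ⊓ W`, and induction on `dim (U ⊓ W)` gives `h(U) ⊓ W = 0`. When `dim U + dim W ≥ dim V`,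
apply this to `Uᗮ` and `Wᗮ`: isometries commute with `ᗮ`, and `(h(U) ⊔ W)ᗮ ≤ h(Uᗮ) ⊓ Wᗮ`.
-/

open Module

theorem Submodule.exists_notMem_notMem_of_ne_top {R M : Type*} [Ring R] [AddCommGroup M]
    [Module R M] {p q : Submodule R M} (hp : p ≠ ⊤) (hq : q ≠ ⊤) : ∃ x, x ∉ p ∧ x ∉ q := by
  by_contra! h
  have hcover : ((⊤ : Submodule R M) : Set M) ⊆ p ∪ q := fun x _ => or_iff_not_imp_left.2 (h x)
  rcases AddSubgroupClass.subset_union.1 hcover with hp' | hq'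
  exacts [hp (top_le_iff.1 hp'), hq (top_le_iff.1 hq')]

theorem LinearMap.transvection_map_inf_le {K V : Type*} [DivisionRing K] [AddCommGroup V]
    [Module K V] (f : Dual K V) {u : V} {U W : Submodule K V} (hu : u ∉ U ⊔ W) :
    U.map (transvection f u) ⊓ W ≤ U ⊓ W ⊓ LinearMap.ker f := by
  rintro _ ⟨⟨y, hyU, rfl⟩, hyW⟩
  have hfy : f y = 0 := by
    by_contra hfy
    refine hu ?_
    have : u = (f y)⁻¹ • (transvection f u y - y) := by
      rw [transvection.apply, add_sub_cancel_left, smul_smul, inv_mul_cancel₀ hfy, one_smul]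
    rw [this]
    exact Submodule.smul_mem _ _
      (Submodule.sub_mem _ (Submodule.mem_sup_right hyW) (Submodule.mem_sup_left hyU))
  have hy : transvection f u y = y := by rw [transvection.apply, hfy, zero_smul, add_zero]
  rw [hy] at hyW ⊢
  exact ⟨⟨hyU, hyW⟩, hfy⟩

namespace LinearMap.BilinForm

variable {K V : Type*} [Field K] [AddCommGroup V] [Module K V] {B : LinearMap.BilinForm K V}

noncomputable def symplecticTransvection (hB : B.IsAlt) (u : V) : V ≃ₗ[K] V :=
  LinearEquiv.transvection (f := B.flip u) (v := u) (hB u)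

theorem symplecticTransvection_apply (hB : B.IsAlt) (u x : V) :
    symplecticTransvection hB u x = x + B x u • u := rfl

theorem apply_symplecticTransvection (hB : B.IsAlt) (u x y : V) :
    B (symplecticTransvection hB u x) (symplecticTransvection hB u y) = B x y := by
  simp only [symplecticTransvection_apply, map_add, map_smul, LinearMap.add_apply,
    LinearMap.smul_apply, smul_eq_mul, hB u, ← hB.neg_eq u y]
  ring

theorem map_orthogonal {h : V ≃ₗ[K] V} (hh : ∀ v w, B (h v) (h w) = B v w)
    (W : Submodule K V) :
    (B.orthogonal W).map (h : V →ₗ[K] V) = B.orthogonal (W.map (h : V →ₗ[K] V)) := by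
  ext x
  simp only [Submodule.mem_map, mem_orthogonal_iff, LinearEquiv.coe_coe]
  constructor
  · rintro ⟨y, hy, rfl⟩ _ ⟨w, hw, rfl⟩
    exact (hh w y).trans (hy w hw)
  · intro hx
    refine ⟨h.symm x, fun w hw => ?_, h.apply_symm_apply x⟩
    rw [← hh, h.apply_symm_apply]
    exact hx _ ⟨w, hw, rfl⟩

variable [FiniteDimensional K V]

theorem orthogonal_ne_top (hB : B.Nondegenerate) (hB₀ : B.IsRefl) {N : Submodule K V}
    (hN : N ≠ ⊥) : B.orthogonal N ≠ ⊤ := by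
  intro h
  rw [← orthogonal_orthogonal hB hB₀ N, h, orthogonal_top_eq_bot hB] at hN
  exact hN rfl

theorem exists_finrank_map_symplecticTransvection_inf_lt (hB : B.IsAlt) (hB' : B.Nondegenerate)
    {U W : Submodule K V} (hinf : U ⊓ W ≠ ⊥) (hsup : U ⊔ W ≠ ⊤) :
    ∃ u, finrank K ↥(U.map (symplecticTransvection hB u : V →ₗ[K] V) ⊓ W) <
      finrank K ↥(U ⊓ W) := by
  obtain ⟨u, huUW, hu⟩ :=
    Submodule.exists_notMem_notMem_of_ne_top hsup (orthogonal_ne_top hB' hB.isRefl hinf)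
  obtain ⟨v, hvU, hvW, hvu⟩ : ∃ v ∈ U, v ∈ W ∧ B v u ≠ 0 := by
    simpa [mem_orthogonal_iff] using hu
  refine ⟨u, ?_⟩
  calc _ ≤ finrank K ↥(U ⊓ W ⊓ LinearMap.ker (B.flip u)) :=
        Submodule.finrank_mono (LinearMap.transvection_map_inf_le _ huUW)
    _ < _ := Submodule.finrank_lt_finrank_of_lt <|
        inf_lt_left.2 fun hle => hvu (by simpa using hle ⟨hvU, hvW⟩)

theorem exists_isometry_map_inf_eq_bot (hB : B.IsAlt) (hB' : B.Nondegenerate)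
    {U W : Submodule K V} (hdim : finrank K U + finrank K W ≤ finrank K V) :
    ∃ h : V ≃ₗ[K] V, (∀ v w, B (h v) (h w) = B v w) ∧ U.map (h : V →ₗ[K] V) ⊓ W = ⊥ := by
  induction hk : finrank K ↥(U ⊓ W) using Nat.strong_induction_on generalizing U with
  | _ k IH =>
  by_cases hinf : U ⊓ W = ⊥
  · exact ⟨LinearEquiv.refl K V, fun _ _ => rfl, by simpa using hinf⟩
  have hsup : U ⊔ W ≠ ⊤ := by
    intro hsup
    have := Submodule.finrank_sup_add_finrank_inf_eq U W
    rw [hsup, finrank_top] at this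
    exact hinf (Submodule.finrank_eq_zero.1 (by omega))
  obtain ⟨u, hu⟩ := exists_finrank_map_symplecticTransvection_inf_lt hB hB' hinf hsup
  set T := symplecticTransvection hB u
  obtain ⟨h, hh, hTh⟩ := IH _ (hk ▸ hu) (U := U.map (T : V →ₗ[K] V))
    (by rwa [LinearEquiv.finrank_map_eq]) rfl
  refine ⟨T.trans h, fun v w => by simp [hh, T, apply_symplecticTransvection], ?_⟩
  rwa [LinearEquiv.coe_trans, Submodule.map_comp]

theorem exists_isometry_map_sup_eq_top (hB : B.IsAlt) (hB' : B.Nondegenerate)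
    {U W : Submodule K V} (hdim : finrank K V ≤ finrank K U + finrank K W) :
    ∃ h : V ≃ₗ[K] V, (∀ v w, B (h v) (h w) = B v w) ∧ U.map (h : V →ₗ[K] V) ⊔ W = ⊤ := by
  have hdim' : finrank K ↥(B.orthogonal U) + finrank K ↥(B.orthogonal W) ≤ finrank K V := by
    rw [finrank_orthogonal hB', finrank_orthogonal hB']
    have := U.finrank_le
    have := W.finrank_le
    omega
  obtain ⟨h, hh, hinf⟩ := exists_isometry_map_inf_eq_bot hB hB' hdim'
  refine ⟨h, hh, ?_⟩
  have hbot : B.orthogonal (U.map (h : V →ₗ[K] V) ⊔ W) = ⊥ := by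
    refine le_bot_iff.1 ?_
    calc B.orthogonal (U.map (h : V →ₗ[K] V) ⊔ W)
        ≤ B.orthogonal (U.map (h : V →ₗ[K] V)) ⊓ B.orthogonal W :=
          le_inf (orthogonal_le le_sup_left) (orthogonal_le le_sup_right)
      _ = ⊥ := by rw [← map_orthogonal hh, hinf]
  rw [← orthogonal_orthogonal hB' hB.isRefl (U.map (h : V →ₗ[K] V) ⊔ W), hbot, orthogonal_bot]

theorem exists_isometry_map_inf_eq_bot_and_map_sup_eq_top (hB : B.IsAlt) (hB' : B.Nondegenerate)
    (U W : Submodule K V) :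
    ∃ h : V ≃ₗ[K] V, (∀ v w, B (h v) (h w) = B v w) ∧
      (finrank K U + finrank K W ≤ finrank K V → U.map (h : V →ₗ[K] V) ⊓ W = ⊥) ∧
      (finrank K V ≤ finrank K U + finrank K W → U.map (h : V →ₗ[K] V) ⊔ W = ⊤) := by
  rcases le_or_gt (finrank K U + finrank K W) (finrank K V) with hle | hlt
  · obtain ⟨h, hh, hinf⟩ := exists_isometry_map_inf_eq_bot hB hB' hle
    refine ⟨h, hh, fun _ => hinf, fun hge => ?_⟩
    refine Submodule.eq_top_of_disjoint _ _ ?_ (disjoint_iff.2 hinf)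
    rwa [LinearEquiv.finrank_map_eq]
  · obtain ⟨h, hh, hsup⟩ := exists_isometry_map_sup_eq_top hB hB' hlt.le
    exact ⟨h, hh, fun hle => absurd hle hlt.not_ge, fun _ => hsup⟩

end LinearMap.BilinForm

theorem stdSymplectic_isAlt (n : ℕ) : (stdSymplectic n).IsAlt := by
  intro v
  simp [stdSymplectic, Matrix.toBilin'_apply', Matrix.fromBlocks_mulVec, dotProduct,
    Fintype.sum_sum_type, Matrix.neg_mulVec, mul_comm]

theorem stdSymplectic_nondegenerate (n : ℕ) : (stdSymplectic n).Nondegenerate := by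
  refine (Matrix.nondegenerate_of_det_ne_zero ?_).toBilin'
  have hJ : (Matrix.fromBlocks 0 1 (-1) 0 : Matrix (Fin n ⊕ Fin n) (Fin n ⊕ Fin n) ℝ) =
      -Matrix.J (Fin n) ℝ := by
    simp [Matrix.J, Matrix.fromBlocks_neg]
  rw [hJ, Matrix.det_neg]
  exact mul_ne_zero (by simp) (Matrix.isUnit_det_J _ _).ne_zero

/-- For any two subspaces `W₁, W₂` of `ℝ^{2n}` there is `h ∈ Sp(V,ω)` such that
`h(W₁)` and `W₂` are in general position: `h(W₁) ∩ W₂ = 0` if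
`dim W₁ + dim W₂ ≤ 2n`, and `h(W₁) + W₂ = V` if `dim W₁ + dim W₂ ≥ 2n`. -/
theorem stmt_4 (n : ℕ) (W₁ W₂ : Submodule ℝ ((Fin n ⊕ Fin n) → ℝ)) :
    ∃ h : ((Fin n ⊕ Fin n) → ℝ) ≃ₗ[ℝ] ((Fin n ⊕ Fin n) → ℝ),
      (∀ v w, stdSymplectic n (h v) (h w) = stdSymplectic n v w) ∧
      (Module.finrank ℝ ↥W₁ + Module.finrank ℝ ↥W₂ ≤ 2 * n →
        W₁.map (h : ((Fin n ⊕ Fin n) → ℝ) →ₗ[ℝ] ((Fin n ⊕ Fin n) → ℝ)) ⊓ W₂ = ⊥) ∧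
      (2 * n ≤ Module.finrank ℝ ↥W₁ + Module.finrank ℝ ↥W₂ →
        W₁.map (h : ((Fin n ⊕ Fin n) → ℝ) →ₗ[ℝ] ((Fin n ⊕ Fin n) → ℝ)) ⊔ W₂ = ⊤) := by
  have hdim : finrank ℝ ((Fin n ⊕ Fin n) → ℝ) = 2 * n := by simp [two_mul]
  simpa only [hdim] using LinearMap.BilinForm.exists_isometry_map_inf_eq_bot_and_map_sup_eq_top
    (stdSymplectic_isAlt n) (stdSymplectic_nondegenerate n) W₁ W₂
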